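/- Let μ ∈ (0, 1/4], let n be a positive integer, let p be a prime, and let v ∈ (ℤ/pℤ)^n. Then there exists T ⊆ [n] such that v_i ∈ N_μ(v_T) for all i ∉ T, ρ_μ(v_T) ≤ (1 - μ/2)^{|T|}, and consequently |T| ≤ (2/μ)·log(1/ρ_μ(v)). -/

import Mathlib

/-!
For `μ ≤ 1/2` the Fourier transform of the law of `X_μ(w)` is `∏ᵢ (1 - μ + μ cos (2π wᵢ ξ / p)) ≥ 0`,
so by Fourier inversion the law is maximal at `0`: `ρ_μ(w) = P(X_μ(w) = 0)`. Appending a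
coordinate `a` turns `P(X = 0)` into `(1 - μ) P(X = 0) + μ P(X = a)`, which is at most
`(1 - μ/2) P(X = 0)` when `a ∉ N_μ(w)`. Hence a largest `T` with `ρ_μ(v_T) ≤ (1 - μ/2)^|T|` has
`vᵢ ∈ N_μ(v_T)` for every `i ∉ T`. Appending coordinates only averages the law, so
`ρ_μ(v) ≤ ρ_μ(v_T)`, and `1 - μ/2 ≤ exp (-μ/2)` gives the bound on `|T|`.
-/

/-- `probX μ v x` is the probability that the random walk `X_μ(v) = ε₁v₁ + ⋯ + εₙvₙ`
(valued in `ℤ/pℤ`) equals `x`, where `ε₁,…,εₙ` are i.i.d. with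
`P(εᵢ = 1) = P(εᵢ = -1) = μ/2` and `P(εᵢ = 0) = 1 - μ`. -/
noncomputable def probX {p : ℕ} [NeZero p] {ι : Type} [Fintype ι] [DecidableEq ι]
    (μ : ℝ) (v : ι → ZMod p) (x : ZMod p) : ℝ :=
  ∑ ε : ι → ({-1, 0, 1} : Finset ℤ),
    (∏ i, if (ε i : ℤ) = 0 then 1 - μ else μ / 2) *
      (if (∑ i, ((ε i : ℤ) : ZMod p) * v i) = x then 1 else 0)

/-- `rho μ v = max_x P(X_μ(v) = x)`, the largest atom of the random walk `X_μ(v)`. -/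
noncomputable def rho {p : ℕ} [NeZero p] {ι : Type} [Fintype ι] [DecidableEq ι]
    (μ : ℝ) (v : ι → ZMod p) : ℝ :=
  ⨆ x : ZMod p, probX μ v x
open scoped Classical in
/-- The neighbourhood `N_μ(w) = {x : P(X_μ(w) = x) > (1/2) P(X_μ(w) = 0)}`. -/
noncomputable def nbhd {p : ℕ} [NeZero p] {ι : Type} [Fintype ι] [DecidableEq ι]
    (μ : ℝ) (w : ι → ZMod p) : Finset (ZMod p) :=
  Finset.univ.filter fun x => probX μ w x > probX μ w 0 / 2

open Finset

section Walk

variable {p : ℕ} [NeZero p] {μ : ℝ}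

lemma probX_comp_equiv {ι κ : Type} [Fintype ι] [DecidableEq ι] [Fintype κ] [DecidableEq κ]
    (w : ι → ZMod p) (e : κ ≃ ι) (x : ZMod p) : probX μ (w ∘ e) x = probX μ w x := by
  unfold probX
  refine Fintype.sum_equiv (e.arrowCongr (Equiv.refl _)) _ _ fun ε => ?_
  congr 1
  · exact Fintype.prod_equiv e _ _ fun i => by simp [Equiv.arrowCongr]
  · congr 2
    exact Fintype.sum_equiv e _ _ fun i => by simp [Equiv.arrowCongr]

lemma probX_neg {ι : Type} [Fintype ι] [DecidableEq ι] (w : ι → ZMod p) (x : ZMod p) :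
    probX μ w (-x) = probX μ w x := by
  unfold probX
  let negSign : ({-1, 0, 1} : Finset ℤ) ≃ ({-1, 0, 1} : Finset ℤ) :=
    (Equiv.neg ℤ).subtypeEquiv fun a => by simp; omega
  refine Fintype.sum_equiv (Equiv.piCongrRight fun _ => negSign) _ _ fun ε => ?_
  simp [negSign, neg_eq_iff_eq_neg]

lemma probX_of_isEmpty {ι : Type} [Fintype ι] [DecidableEq ι] [IsEmpty ι]
    (w : ι → ZMod p) (x : ZMod p) : probX μ w x = if x = 0 then 1 else 0 := by
  simp [probX, eq_comm]

lemma probX_option {ι : Type} [Fintype ι] [DecidableEq ι] (w : Option ι → ZMod p) (x : ZMod p) :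
    probX μ w x = (1 - μ) * probX μ (w ∘ some) x + μ / 2 * probX μ (w ∘ some) (x - w none)
      + μ / 2 * probX μ (w ∘ some) (x + w none) := by
  have split : probX μ w x = ∑ s : ({-1, 0, 1} : Finset ℤ),
      (if (s : ℤ) = 0 then 1 - μ else μ / 2) * probX μ (w ∘ some) (x - s * w none) := by
    unfold probX
    rw [← Equiv.piOptionEquivProd.symm.sum_comp, Fintype.sum_prod_type]
    refine Fintype.sum_congr _ _ fun s => ?_
    rw [mul_sum]
    refine Fintype.sum_congr _ _ fun ε => ?_
    simp [Fintype.prod_option, Fintype.sum_option, eq_sub_iff_add_eq']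
  rw [split, sum_coe_sort ({-1, 0, 1} : Finset ℤ) fun s =>
    (if s = 0 then 1 - μ else μ / 2) * probX μ (w ∘ some) (x - s * w none)]
  simp [sub_eq_add_neg]
  ring

lemma probX_le_rho {ι : Type} [Fintype ι] [DecidableEq ι] (w : ι → ZMod p) (x : ZMod p) :
    probX μ w x ≤ rho μ w :=
  le_ciSup (Set.finite_range _).bddAbove x

lemma probX_zero_pos {ι : Type} [Fintype ι] [DecidableEq ι] (hμ0 : 0 ≤ μ) (hμ1 : μ < 1)
    (w : ι → ZMod p) : 0 < probX μ w 0 := by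
  let ε₀ : ι → ({-1, 0, 1} : Finset ℤ) := fun _ => ⟨0, by simp⟩
  refine lt_of_lt_of_le ?_ (single_le_sum (fun ε _ => ?_) (mem_univ ε₀))
  · simp [ε₀, sub_pos.mpr hμ1]
  · refine mul_nonneg (prod_nonneg fun i _ => ?_) ?_ <;> split_ifs <;> linarith

end Walk

section Fourier

open ZMod

variable {N : ℕ} [NeZero N]

lemma dft_comp_sub_const {E : Type*} [AddCommGroup E] [Module ℂ E] (Φ : ZMod N → E)
    (a k : ZMod N) : 𝓕 (fun x => Φ (x - a)) k = stdAddChar (-(a * k)) • 𝓕 Φ k := by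
  simp only [dft_apply, smul_sum, smul_smul, ← AddChar.map_add_eq_mul]
  refine Fintype.sum_equiv (Equiv.subRight a) _ _ fun x => ?_
  simp only [Equiv.subRight_apply]
  ring_nf

open ComplexOrder in
lemma le_apply_zero_of_dft_nonneg {Φ : ZMod N → ℝ} (h : ∀ k, 0 ≤ 𝓕 (fun x => (Φ x : ℂ)) k)
    (x : ZMod N) : Φ x ≤ Φ 0 := by
  set Ψ := 𝓕 (fun x => (Φ x : ℂ))
  have inversion (y : ZMod N) : ((N * Φ y : ℝ) : ℂ) = ∑ j, stdAddChar (j * y) * Ψ j := by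
    have := congr_fun (dft.symm_apply_apply fun x => (Φ x : ℂ)) y
    rw [invDFT_apply, smul_eq_mul, inv_mul_eq_iff_eq_mul₀ (NeZero.ne (N : ℂ))] at this
    simpa only [smul_eq_mul, Complex.ofReal_mul, Complex.ofReal_natCast] using this.symm
  have hΨ : ∑ j, ((‖Ψ j‖ : ℝ) : ℂ) = ((N * Φ 0 : ℝ) : ℂ) := by
    simp [inversion, Complex.norm_of_nonneg' (h _)]
  refine le_of_mul_le_mul_left ?_ (Nat.cast_pos.mpr (Nat.pos_of_neZero N))
  calc (N * Φ x : ℝ) = (∑ j, stdAddChar (j * x) * Ψ j).re := by rw [← inversion, Complex.ofReal_re]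
    _ ≤ ‖∑ j, stdAddChar (j * x) * Ψ j‖ := Complex.re_le_norm _
    _ ≤ ∑ j, ‖Ψ j‖ := (norm_sum_le _ _).trans_eq (by simp)
    _ = N * Φ 0 := by exact_mod_cast hΨ

end Fourier

section WalkFourier

open ZMod ComplexOrder

variable {p : ℕ} [NeZero p] {μ : ℝ}

lemma dft_probX_option {ι : Type} [Fintype ι] [DecidableEq ι] (w : Option ι → ZMod p)
    (k : ZMod p) : 𝓕 (fun x => (probX μ w x : ℂ)) k =
      ((1 - μ : ℂ) + μ / 2 * (stdAddChar (w none * k) + stdAddChar (-(w none * k)))) *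
        𝓕 (fun x => (probX μ (w ∘ some) x : ℂ)) k := by
  set Φ := fun x => (probX μ (w ∘ some) x : ℂ)
  have : (fun x => (probX μ w x : ℂ)) = (1 - μ : ℂ) • Φ + (μ / 2 : ℂ) • (fun x => Φ (x - w none))
      + (μ / 2 : ℂ) • (fun x => Φ (x - -w none)) := by
    ext x
    simp [Φ, probX_option, sub_neg_eq_add]
  rw [this]
  simp only [map_add, _root_.map_smul, Pi.add_apply, Pi.smul_apply, dft_comp_sub_const,
    smul_eq_mul, neg_mul, neg_neg]
  ring

lemma one_sub_add_mul_stdAddChar_nonneg (hμ0 : 0 ≤ μ) (hμ : μ ≤ 1 / 2) (t : ZMod p) :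
    0 ≤ (1 - μ : ℂ) + μ / 2 * (stdAddChar t + stdAddChar (-t)) := by
  have hre : (stdAddChar t + stdAddChar (-t) : ℂ) = (2 * (stdAddChar t : ℂ).re : ℝ) := by
    rw [AddChar.map_neg_eq_conj, Complex.add_conj]
  have hbound : -1 ≤ (stdAddChar t : ℂ).re :=
    (abs_le.mp ((Complex.abs_re_le_norm _).trans_eq (by simp))).1
  rw [hre]
  exact_mod_cast (by nlinarith : (0 : ℝ) ≤ 1 - μ + μ / 2 * (2 * (stdAddChar t : ℂ).re))

lemma dft_probX_nonneg (hμ0 : 0 ≤ μ) (hμ : μ ≤ 1 / 2) (ι : Type) [Fintype ι] [DecidableEq ι]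
    (w : ι → ZMod p) (k : ZMod p) : 0 ≤ 𝓕 (fun x => (probX μ w x : ℂ)) k := by
  refine Finite.induction_empty_option (P := fun ι => ∀ [Fintype ι] [DecidableEq ι]
    (w : ι → ZMod p), 0 ≤ 𝓕 (fun x => (probX μ w x : ℂ)) k) ?_ ?_ ?_ ι w
  · intro α β e ih _ _ w
    have := Fintype.ofEquiv β e.symm
    classical
    simpa only [probX_comp_equiv] using ih (w ∘ e)
  · intro _ _ w
    simp [probX_of_isEmpty, dft_apply, apply_ite]
  · intro α _ ih hfin hdec w
    obtain rfl : hfin = instFintypeOption := Subsingleton.elim _ _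
    classical
    obtain rfl : hdec = Option.instDecidableEq := Subsingleton.elim _ _
    rw [dft_probX_option]
    exact mul_nonneg (one_sub_add_mul_stdAddChar_nonneg hμ0 hμ _) (ih _)

lemma probX_le_probX_zero {ι : Type} [Fintype ι] [DecidableEq ι] (hμ0 : 0 ≤ μ) (hμ : μ ≤ 1 / 2)
    (w : ι → ZMod p) (x : ZMod p) : probX μ w x ≤ probX μ w 0 :=
  le_apply_zero_of_dft_nonneg (dft_probX_nonneg hμ0 hμ ι w) x

lemma rho_eq_probX_zero {ι : Type} [Fintype ι] [DecidableEq ι] (hμ0 : 0 ≤ μ) (hμ : μ ≤ 1 / 2)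
    (w : ι → ZMod p) : rho μ w = probX μ w 0 :=
  (ciSup_le (probX_le_probX_zero hμ0 hμ w)).antisymm (probX_le_rho w 0)

end WalkFourier

section Restrict

variable {p : ℕ} [NeZero p] {μ : ℝ} {α : Type} [DecidableEq α]

lemma probX_insert {v : α → ZMod p} {i : α} {T : Finset α} (hi : i ∉ T) (x : ZMod p) :
    probX μ (fun j : (insert i T : Finset α) => v j) x =
      (1 - μ) * probX μ (fun j : T => v j) x + μ / 2 * probX μ (fun j : T => v j) (x - v i)
        + μ / 2 * probX μ (fun j : T => v j) (x + v i) := by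
  have := probX_comp_equiv (μ := μ) (fun o => v ((subtypeInsertEquivOption hi).symm o : α))
    (subtypeInsertEquivOption hi) x
  simp only [Function.comp_def, Equiv.symm_apply_apply] at this
  rw [this, probX_option]
  rfl

lemma rho_insert_le (hμ0 : 0 ≤ μ) (hμ1 : μ ≤ 1) (v : α → ZMod p) (i : α) (T : Finset α) :
    rho μ (fun j : (insert i T : Finset α) => v j) ≤ rho μ (fun j : T => v j) := by
  by_cases hi : i ∈ T
  · rw [insert_eq_of_mem hi]
  refine ciSup_le fun x => ?_
  rw [probX_insert hi]
  have := probX_le_rho (μ := μ) (fun j : T => v j) x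
  have := probX_le_rho (μ := μ) (fun j : T => v j) (x - v i)
  have := probX_le_rho (μ := μ) (fun j : T => v j) (x + v i)
  nlinarith

lemma rho_union_le (hμ0 : 0 ≤ μ) (hμ1 : μ ≤ 1) (v : α → ZMod p) (T U : Finset α) :
    rho μ (fun j : (T ∪ U : Finset α) => v j) ≤ rho μ (fun j : T => v j) := by
  induction U using Finset.induction_on with
  | empty => rw [union_empty]
  | insert a U _ ih => exact union_insert a T U ▸ (rho_insert_le hμ0 hμ1 v a _).trans ih

lemma rho_le_rho_restrict [Fintype α] (hμ0 : 0 ≤ μ) (hμ1 : μ ≤ 1) (v : α → ZMod p)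
    (T : Finset α) : rho μ v ≤ rho μ (fun j : T => v j) := by
  have hv : rho μ v = rho μ (fun j : (T ∪ univ : Finset α) => v j) := by
    unfold rho
    exact congrArg iSup <| funext fun x => (probX_comp_equiv v
      (Equiv.subtypeUnivEquiv fun j => mem_union_right T (mem_univ j)) x).symm
  exact hv ▸ rho_union_le hμ0 hμ1 v T univ

lemma probX_insert_zero_le {v : α → ZMod p} {i : α} {T : Finset α} (hμ0 : 0 ≤ μ) (hi : i ∉ T)
    (hvi : v i ∉ nbhd μ (fun j : T => v j)) :
    probX μ (fun j : (insert i T : Finset α) => v j) 0 ≤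
      (1 - μ / 2) * probX μ (fun j : T => v j) 0 := by
  have hvi : probX μ (fun j : T => v j) (v i) ≤ probX μ (fun j : T => v j) 0 / 2 := by
    simpa [nbhd] using hvi
  rw [probX_insert hi, zero_sub, zero_add, probX_neg]
  nlinarith

lemma exists_forall_mem_nbhd_rho_le [Fintype α] (hμ0 : 0 ≤ μ) (hμ : μ ≤ 1 / 2)
    (v : α → ZMod p) : ∃ T : Finset α, (∀ i ∉ T, v i ∈ nbhd μ (fun j : T => v j)) ∧
      rho μ (fun j : T => v j) ≤ (1 - μ / 2) ^ #T := by
  simp only [rho_eq_probX_zero hμ0 hμ]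
  obtain ⟨T, hT, hmax⟩ := exists_max_image
    (univ.filter fun T : Finset α => probX μ (fun j : T => v j) 0 ≤ (1 - μ / 2) ^ #T) card
    ⟨∅, by simp [probX_of_isEmpty]⟩
  refine ⟨T, fun i hi => by_contra fun hvi => ?_, (mem_filter.mp hT).2⟩
  have hins : insert i T ∈
      univ.filter fun T : Finset α => probX μ (fun j : T => v j) 0 ≤ (1 - μ / 2) ^ #T := by
    refine mem_filter.mpr ⟨mem_univ _, ?_⟩
    calc probX μ (fun j : (insert i T : Finset α) => v j) 0
        ≤ (1 - μ / 2) * probX μ (fun j : T => v j) 0 := probX_insert_zero_le hμ0 hi hvi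
      _ ≤ (1 - μ / 2) * (1 - μ / 2) ^ #T :=
        mul_le_mul_of_nonneg_left (mem_filter.mp hT).2 (by linarith)
      _ = (1 - μ / 2) ^ #(insert i T) := by rw [card_insert_of_notMem hi, pow_succ']
  have := hmax _ hins
  rw [card_insert_of_notMem hi] at this
  omega

end Restrict

lemma natCast_le_two_div_mul_log_inv {μ r : ℝ} {k : ℕ} (hμ0 : 0 < μ) (hμ2 : μ ≤ 2) (hr : 0 < r)
    (h : r ≤ (1 - μ / 2) ^ k) : (k : ℝ) ≤ 2 / μ * Real.log r⁻¹ := by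
  have hexp : r ≤ Real.exp (-(μ / 2 * k)) := by
    calc r ≤ (1 - μ / 2) ^ k := h
      _ ≤ Real.exp (-(μ / 2)) ^ k := by
        gcongr
        · linarith
        · linarith [Real.add_one_le_exp (-(μ / 2))]
      _ = Real.exp (-(μ / 2 * k)) := by rw [← Real.exp_nat_mul]; ring_nf
  have hlog := (Real.log_le_iff_le_exp hr).mpr hexp
  rw [Real.log_inv, div_mul_eq_mul_div, le_div_iff₀ hμ0]
  linarith

theorem greedy_inverse_littlewood_offord
    (μ : ℝ) (hμ : μ ∈ Set.Ioc (0 : ℝ) (1 / 4)) (n p : ℕ)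
    [Fact p.Prime] (v : Fin n → ZMod p) :
    ∃ T : Finset (Fin n),
      (∀ i ∉ T, v i ∈ nbhd μ (fun j : T => v j.1)) ∧
      rho μ (fun j : T => v j.1) ≤ (1 - μ / 2) ^ T.card ∧
      (T.card : ℝ) ≤ 2 / μ * Real.log (rho μ v)⁻¹ := by
  obtain ⟨hμ0, hμ4⟩ := hμ
  obtain ⟨T, hnbhd, hrho⟩ := exists_forall_mem_nbhd_rho_le hμ0.le (by linarith) v
  refine ⟨T, hnbhd, hrho, natCast_le_two_div_mul_log_inv hμ0 (by linarith) ?_ ?_⟩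
  · exact (probX_zero_pos hμ0.le (by linarith) v).trans_le (probX_le_rho v 0)
  · exact (rho_le_rho_restrict hμ0.le (by linarith) v T).trans hrho
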